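/- arXiv:2103.13563 — 4 statements merged into one kernel-verified Lean document; each statement's English description precedes it below -/
import Mathlib

section
/- Let E be a real Banach space, let 0 ≤ ρ ≤ R₀ with R₀ > 0, let τ ≥ 0, and let b be a function assigning to every real number r with ρ ≤ r ≤ R₀ and r > 0 a point b(r) ∈ E. Assume that ‖b(r) − b(s)‖ ≤ τ·s whenever ρ ≤ r ≤ s ≤ min(2r, R₀) and r > 0. Then: (i) ‖b(r) − b(s)‖ ≤ 5τ·max(r, s) for all r, s with ρ ≤ r, s ≤ R₀ and r, s > 0; (ii) there exists a point b_* ∈ E with b_* = b(ρ) if ρ > 0, and with b(r) → b_* as r → 0⁺ if ρ = 0, and in either case ‖b(r) − b_*‖ ≤ 5τ·r for every r with ρ ≤ r ≤ R₀, r > 0. -/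
open Filter Topology

/-- chaining estimate for the centers of a weak-cone region,
cf. Lemma 3.4, Item (1): if `‖b(r) − b(s)‖ ≤ τ·s` whenever
`ρ ≤ r ≤ s ≤ min(2r, R₀)`, then `‖b(r) − b(s)‖ ≤ 5τ·max(r, s)` for all
`r, s ∈ [ρ, R₀] ∩ (0, ∞)`, and the limit center `b_* = b(ρ)` (resp.
`b_* = lim_{r→0⁺} b(r)` when `ρ = 0`) exists and satisfies
`‖b(r) − b_*‖ ≤ 5τ·r`. -/
theorem weak_cone_center_chaining
    {E : Type*} [NormedAddCommGroup E] [NormedSpace ℝ E] [CompleteSpace E]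
    (ρ R₀ τ : ℝ) (hρ : 0 ≤ ρ) (hρR : ρ ≤ R₀) (hR₀ : 0 < R₀) (hτ : 0 ≤ τ)
    (b : ℝ → E)
    (hb : ∀ r s : ℝ, ρ ≤ r → r ≤ s → s ≤ min (2 * r) R₀ → 0 < r →
      ‖b r - b s‖ ≤ τ * s) :
    (∀ r s : ℝ, ρ ≤ r → r ≤ R₀ → 0 < r → ρ ≤ s → s ≤ R₀ → 0 < s →
        ‖b r - b s‖ ≤ 5 * τ * max r s) ∧
    (∃ bstar : E,
      (0 < ρ → bstar = b ρ) ∧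
      (ρ = 0 → Tendsto b (nhdsWithin 0 (Set.Ioi 0)) (𝓝 bstar)) ∧
      (∀ r : ℝ, ρ ≤ r → r ≤ R₀ → 0 < r → ‖b r - bstar‖ ≤ 5 * τ * r)) := by
  -- Key chaining lemma: ‖b r - b s‖ ≤ 2 τ s whenever ρ ≤ r ≤ s ≤ R₀, r > 0.
  have key : ∀ n : ℕ, ∀ r s : ℝ, ρ ≤ r → r ≤ s → s ≤ R₀ → 0 < r →
      s ≤ 2 ^ n * r → ‖b r - b s‖ ≤ 2 * τ * s := by
    intro n
    induction n with
    | zero =>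
      intro r s h1 h2 h3 h4 h5
      have : s = r := le_antisymm (by simpa using h5) h2
      subst this
      simp
      positivity
    | succ n ih =>
      intro r s h1 h2 h3 h4 h5
      by_cases hcase : s ≤ 2 * r
      · have := hb r s h1 h2 (le_min hcase h3) h4
        nlinarith [norm_nonneg (b r - b s), mul_nonneg hτ (h4.le.trans h2)]
      · push_neg at hcase
        have hs2 : r ≤ s / 2 := by linarith
        have hρ2 : ρ ≤ s / 2 := h1.trans hs2
        have hpos2 : 0 < s / 2 := lt_of_lt_of_le h4 hs2
        have h52 : s / 2 ≤ 2 ^ n * r := by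
          rw [pow_succ] at h5; linarith
        have h32 : s / 2 ≤ R₀ := by linarith
        have ihh := ih r (s / 2) h1 hs2 h32 h4 h52
        have hb2 : ‖b (s / 2) - b s‖ ≤ τ * s := by
          apply hb (s / 2) s hρ2 (by linarith) (le_min (by linarith) h3) hpos2
        calc ‖b r - b s‖ ≤ ‖b r - b (s / 2)‖ + ‖b (s / 2) - b s‖ :=
              norm_sub_le_norm_sub_add_norm_sub _ _ _
          _ ≤ 2 * τ * (s / 2) + τ * s := add_le_add ihh hb2
          _ = 2 * τ * s := by ring
  have key' : ∀ r s : ℝ, ρ ≤ r → r ≤ s → s ≤ R₀ → 0 < r →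
      ‖b r - b s‖ ≤ 2 * τ * s := by
    intro r s h1 h2 h3 h4
    obtain ⟨n, hn⟩ := pow_unbounded_of_one_lt (s / r) (one_lt_two (α := ℝ))
    exact key n r s h1 h2 h3 h4 (by rw [div_lt_iff₀ h4] at hn; linarith)
  have part1 : ∀ r s : ℝ, ρ ≤ r → r ≤ R₀ → 0 < r → ρ ≤ s → s ≤ R₀ → 0 < s →
      ‖b r - b s‖ ≤ 5 * τ * max r s := by
    intro r s h1 h2 h3 h4 h5 h6
    rcases le_total r s with h | h
    · have := key' r s h1 h h5 h3
      have hm : max r s = s := max_eq_right h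
      rw [hm]; nlinarith
    · have := key' s r h4 h h2 h6
      rw [norm_sub_rev] at this
      have hm : max r s = r := max_eq_left h
      rw [hm]; nlinarith
  refine ⟨part1, ?_⟩
  rcases eq_or_lt_of_le hρ with hρ0 | hρ0
  · -- ρ = 0 : construct the limit.
    subst hρ0
    set u : ℕ → E := fun n => b (R₀ / 2 ^ n) with hu
    have hun : ∀ n, 0 < R₀ / 2 ^ n := fun n => by positivity
    have huR : ∀ n, R₀ / 2 ^ n ≤ R₀ := fun n => by
      apply div_le_self hR₀.le; exact one_le_pow₀ (by norm_num)
    have hcau : CauchySeq u := by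
      apply cauchySeq_of_le_geometric (1/2 : ℝ) (2 * τ * R₀) (by norm_num)
      intro n
      have : ‖u n - u (n+1)‖ ≤ 2 * τ * (R₀ / 2 ^ n) := by
        rw [norm_sub_rev]
        apply key' (R₀ / 2 ^ (n+1)) (R₀ / 2 ^ n) (hun _).le ?_ (huR _) (hun _)
        apply div_le_div_of_nonneg_left hR₀.le (by positivity)
        exact pow_le_pow_right₀ (by norm_num) (Nat.le_succ n)
      calc dist (u n) (u (n+1)) = ‖u n - u (n+1)‖ := dist_eq_norm _ _
        _ ≤ 2 * τ * (R₀ / 2 ^ n) := this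
        _ = 2 * τ * R₀ * (1/2) ^ n := by
            rw [div_pow, one_pow]; ring
    obtain ⟨bstar, hbstar⟩ := cauchySeq_tendsto_of_complete hcau
    have hbound : ∀ r : ℝ, 0 < r → r ≤ R₀ → ‖b r - bstar‖ ≤ 2 * τ * r := by
      intro r hr hrR
      have htend : Tendsto (fun n => ‖b r - u n‖) atTop (𝓝 ‖b r - bstar‖) :=
        (tendsto_const_nhds.sub hbstar).norm
      apply le_of_tendsto htend
      -- eventually R₀ / 2^n ≤ r, so the bound ‖b r - u n‖ ≤ 2 τ r holds
      have : ∀ᶠ n in atTop, R₀ / 2 ^ n ≤ r := by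
        have h2 : Tendsto (fun n : ℕ => R₀ / 2 ^ n) atTop (𝓝 0) := by
          have hp := (tendsto_pow_atTop_nhds_zero_of_lt_one
            (by norm_num : (0:ℝ) ≤ 1/2) (by norm_num : (1/2 : ℝ) < 1)).const_mul R₀
          rw [mul_zero] at hp
          refine hp.congr fun n => ?_
          rw [div_pow, one_pow]; ring
        exact h2.eventually_le_const hr
      filter_upwards [this] with n hn
      have := key' (R₀ / 2 ^ n) r (hun n).le hn hrR (hun n)
      rw [norm_sub_rev] at this
      exact this
    refine ⟨bstar, fun h => absurd h (lt_irrefl 0), fun _ => ?_, ?_⟩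
    · rw [tendsto_iff_norm_sub_tendsto_zero]
      apply squeeze_zero' (by filter_upwards with r using norm_nonneg _)
        (g := fun r => 2 * τ * r)
      · filter_upwards [Ioc_mem_nhdsGT_of_mem ⟨le_refl 0, hR₀⟩] with r hr
        exact hbound r hr.1 hr.2
      · have : Tendsto (fun r : ℝ => 2 * τ * r) (𝓝[>] 0) (𝓝 (2 * τ * 0)) :=
          (tendsto_const_nhds.mul tendsto_id).mono_left nhdsWithin_le_nhds
        simpa using this
    · intro r _ hrR hr
      have := hbound r hr hrR
      nlinarith
  · -- ρ > 0 : take bstar = b ρ.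
    refine ⟨b ρ, fun _ => rfl, fun h => absurd h (ne_of_gt hρ0), ?_⟩
    intro r h1 h2 h3
    have := key' ρ r (le_refl ρ) h1 h2 hρ0
    rw [norm_sub_rev] at this
    nlinarith
end

section
/- Let E be a real Banach space, R > 0, σ ∈ [0, 1/4], 0 ≤ τ ≤ σ/10, and 0 ≤ ρ ≤ (1−σ)R. Let b be a function assigning to every r with ρ ≤ r ≤ (1−σ)R and r > 0 a point b(r) ∈ E, and suppose ‖b(r) − b(s)‖ ≤ 5τ·max(r, s) for all such r, s. Let a ∈ E and suppose that the closed ball B̄(b(r), r) is contained in the closed ball B̄(a, R) for every r with ρ ≤ r ≤ (1−σ)R, r > 0. Then: (i) ‖b(r) − a‖ ≤ 2σR for every such r; (ii) for every R' with 0 < R' ≤ (1−2σ)R and every r with ρ ≤ r ≤ (1−σ)R' and r > 0, one has B̄(b(r), R') ⊆ B̄(a, R), and B̄(b(s), s) ⊆ B̄(b(r), R') for every s with ρ ≤ s ≤ (1−σ)R' and s > 0. -/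
/-!
At the top radius `r₀ = (1 - σ) R`, the inclusion `B̄(b r₀, r₀) ⊆ B̄(a, R)` forces
`‖b r₀ - a‖ ≤ R - r₀ = σ R`. Since `5 τ ≤ σ / 2`, the chaining estimate keeps any two centers
with radii at most `(1 - σ) L` within `σ L` of each other. Taking `L = R` and passing through
`b r₀` gives `‖b r - a‖ ≤ 2 σ R`, and then every inclusion follows from
`B̄(x, ε) ⊆ B̄(y, δ)` whenever `ε + dist x y ≤ δ`: for `R' ≤ (1 - 2σ) R` one has
`R' + 2 σ R ≤ R`, and `s + σ R' ≤ (1 - σ) R' + σ R' = R'`.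
-/

open Metric

theorem add_dist_le_of_closedBall_subset_closedBall {E : Type*} [NormedAddCommGroup E]
    [NormedSpace ℝ E] {c a : E} {r R : ℝ} (hr : 0 ≤ r) (hrR : r ≤ R)
    (h : closedBall c r ⊆ closedBall a R) : r + dist c a ≤ R := by
  rcases eq_or_ne c a with rfl | hca
  · simpa using hrR
  -- push `c` a further distance `r` directly away from `a`
  set t := r / dist c a
  have hd : 0 < dist c a := dist_pos.mpr hca
  have ht : t * dist c a = r := div_mul_cancel₀ r hd.ne'
  have hx : c + t • (c - a) ∈ closedBall c r := by
    rw [mem_closedBall, dist_eq_norm, add_sub_cancel_left, norm_smul, ← dist_eq_norm,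
      Real.norm_of_nonneg (by positivity), ht]
  have hxa : dist (c + t • (c - a)) a = r + dist c a := by
    have hsmul : c + t • (c - a) - a = (1 + t) • (c - a) := by module
    rw [dist_eq_norm, hsmul, norm_smul, ← dist_eq_norm,
      Real.norm_of_nonneg (by positivity), add_mul, one_mul, ht, add_comm]
  simpa [hxa] using h hx

theorem five_mul_mul_le_of_le_div_ten {σ τ m L : ℝ} (hσ : 0 ≤ σ) (hτ : τ ≤ σ / 10)
    (hm : 0 ≤ m) (hmL : m ≤ L) : 5 * τ * m ≤ σ * L := by
  nlinarith

theorem weak_cone_recenter_balls_general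
    {E : Type*} [NormedAddCommGroup E] [NormedSpace ℝ E]
    (R σ τ ρ : ℝ) (hR : 0 < R) (hσ0 : 0 ≤ σ) (hσ : σ ≤ 1 / 4)
    (hτ : τ ≤ σ / 10) (hρ : ρ ≤ (1 - σ) * R)
    (b : ℝ → E)
    (hchain : ∀ r s : ℝ, ρ ≤ r → r ≤ (1 - σ) * R → 0 < r →
      ρ ≤ s → s ≤ (1 - σ) * R → 0 < s → ‖b r - b s‖ ≤ 5 * τ * max r s)
    (a : E)
    (hball : ∀ r : ℝ, ρ ≤ r → r ≤ (1 - σ) * R → 0 < r →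
      closedBall (b r) r ⊆ closedBall a R) :
    (∀ r : ℝ, ρ ≤ r → r ≤ (1 - σ) * R → 0 < r → ‖b r - a‖ ≤ 2 * σ * R) ∧
    (∀ R' : ℝ, 0 < R' → R' ≤ (1 - 2 * σ) * R →
      ∀ r : ℝ, ρ ≤ r → r ≤ (1 - σ) * R' → 0 < r →
        closedBall (b r) R' ⊆ closedBall a R ∧
        ∀ s : ℝ, ρ ≤ s → s ≤ (1 - σ) * R' → 0 < s →
          closedBall (b s) s ⊆ closedBall (b r) R') := by
  have hr₀ : 0 < (1 - σ) * R := by nlinarith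
  have hcenters_close : ∀ L ≤ R, ∀ r s, ρ ≤ r → r ≤ (1 - σ) * L → 0 < r →
      ρ ≤ s → s ≤ (1 - σ) * L → 0 < s → dist (b r) (b s) ≤ σ * L := by
    intro L hL r s hρr hr hr0 hρs hs hs0
    have hLR : (1 - σ) * L ≤ (1 - σ) * R := by gcongr; linarith
    rw [dist_eq_norm]
    refine (hchain r s hρr (hr.trans hLR) hr0 hρs (hs.trans hLR) hs0).trans ?_
    exact five_mul_mul_le_of_le_div_ten hσ0 hτ (hr0.le.trans (le_max_left r s))
      ((max_le hr hs).trans (by nlinarith))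
  have htop : (1 - σ) * R + dist (b ((1 - σ) * R)) a ≤ R :=
    add_dist_le_of_closedBall_subset_closedBall hr₀.le (by nlinarith) (hball _ hρ le_rfl hr₀)
  have hcenter : ∀ r, ρ ≤ r → r ≤ (1 - σ) * R → 0 < r → ‖b r - a‖ ≤ 2 * σ * R := by
    intro r hρr hr hr0
    rw [← dist_eq_norm]
    linarith [hcenters_close R le_rfl r _ hρr hr hr0 hρ le_rfl hr₀,
      dist_triangle (b r) (b ((1 - σ) * R)) a]
  refine ⟨hcenter, fun R' _ hR' r hρr hr hr0 => ?_⟩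
  have hR'R : R' ≤ R := by nlinarith
  have hr' : r ≤ (1 - σ) * R := hr.trans (by gcongr; linarith)
  refine ⟨closedBall_subset_closedBall' ?_, fun s hρs hs hs0 => closedBall_subset_closedBall' ?_⟩
  · linarith [hcenter r hρr hr' hr0, dist_eq_norm (b r) a]
  · linarith [hcenters_close R' hR'R s r hρs hs hs0 hρr hr hr0]

/-- recentering of weak-cone regions, ball inclusions of
Lemma 3.4, Item (2): if the centers `b(r)` satisfy the chaining estimate
`‖b(r) − b(s)‖ ≤ 5τ·max(r, s)` and each ball `B̄(b(r), r)` lies in `B̄(a, R)`,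
then `‖b(r) − a‖ ≤ 2σR`, and for `R' ≤ (1−2σ)R` one has
`B̄(b(r), R') ⊆ B̄(a, R)` whenever `ρ ≤ r ≤ (1−σ)R'`, together with
`B̄(b(s), s) ⊆ B̄(b(r), R')` for every `ρ ≤ s ≤ (1−σ)R'`. -/
theorem weak_cone_recenter_balls
    {E : Type*} [NormedAddCommGroup E] [NormedSpace ℝ E] [CompleteSpace E]
    (R σ τ ρ : ℝ) (hR : 0 < R) (hσ0 : 0 ≤ σ) (hσ : σ ≤ 1 / 4)
    (hτ0 : 0 ≤ τ) (hτ : τ ≤ σ / 10) (hρ0 : 0 ≤ ρ) (hρ : ρ ≤ (1 - σ) * R)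
    (b : ℝ → E)
    (hchain : ∀ r s : ℝ, ρ ≤ r → r ≤ (1 - σ) * R → 0 < r →
      ρ ≤ s → s ≤ (1 - σ) * R → 0 < s → ‖b r - b s‖ ≤ 5 * τ * max r s)
    (a : E)
    (hball : ∀ r : ℝ, ρ ≤ r → r ≤ (1 - σ) * R → 0 < r →
      closedBall (b r) r ⊆ closedBall a R) :
    (∀ r : ℝ, ρ ≤ r → r ≤ (1 - σ) * R → 0 < r → ‖b r - a‖ ≤ 2 * σ * R) ∧
    (∀ R' : ℝ, 0 < R' → R' ≤ (1 - 2 * σ) * R →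
      ∀ r : ℝ, ρ ≤ r → r ≤ (1 - σ) * R' → 0 < r →
        closedBall (b r) R' ⊆ closedBall a R ∧
        ∀ s : ℝ, ρ ≤ s → s ≤ (1 - σ) * R' → 0 < s →
          closedBall (b s) s ⊆ closedBall (b r) R') :=
  weak_cone_recenter_balls_general R σ τ ρ hR hσ0 hσ hτ hρ b hchain a hball
end

section
/- Let E be a real Banach space, R > 0, σ ∈ [0, 1/4], 0 ≤ τ ≤ σ/10, and 0 ≤ ρ ≤ (1−σ)R. Let b be a function assigning to every r with ρ ≤ r ≤ (1−σ)R and r > 0 a point b(r) ∈ E, with ‖b(r) − b(s)‖ ≤ 5τ·max(r, s) for all such r, s, and suppose B̄(b(r), r) ⊆ B̄(a, R) for every such r, where a ∈ E. Let b_* ∈ E satisfy ‖b(r) − b_*‖ ≤ 5τ·r for every such r, with b_* = b(ρ) in case ρ > 0. Then for every r with ρ ≤ r ≤ (1−3σ)R and r > 0: (i) (1+10τ)r ≤ (1−σ)R; (ii) B̄(b_*, r) ⊆ B̄(b((1+10τ)r), (1+10τ)r) ⊆ B̄(a, R); (iii) if moreover (1−5τ)r ≥ ρ, then B̄(b((1−5τ)r),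 (1−5τ)r) ⊆ B̄(b_*, r). -/
open Metric

/-- ball squeezing after recentering, inclusions (3.10)–(3.12)
in the proof of Lemma 3.4, Item (3): with the chaining estimate
`‖b(r) − b(s)‖ ≤ 5τ·max(r, s)`, the inclusions `B̄(b(r), r) ⊆ B̄(a, R)`, and the
limit center `b_*` with `‖b(r) − b_*‖ ≤ 5τ·r`, each ball `B̄(b_*, r)` for
`ρ ≤ r ≤ (1−3σ)R` is squeezed between `B̄(b((1−5τ)r), (1−5τ)r)` and
`B̄(b((1+10τ)r), (1+10τ)r) ⊆ B̄(a, R)`. -/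
theorem weak_cone_recentered_ball_squeeze
    {E : Type*} [NormedAddCommGroup E] [NormedSpace ℝ E] [CompleteSpace E]
    (R σ τ ρ : ℝ) (hR : 0 < R) (hσ0 : 0 ≤ σ) (hσ : σ ≤ 1 / 4)
    (hτ0 : 0 ≤ τ) (hτ : τ ≤ σ / 10) (hρ0 : 0 ≤ ρ) (hρ : ρ ≤ (1 - σ) * R)
    (b : ℝ → E) (a : E)
    (hchain : ∀ r s : ℝ, ρ ≤ r → r ≤ (1 - σ) * R → 0 < r →
      ρ ≤ s → s ≤ (1 - σ) * R → 0 < s → ‖b r - b s‖ ≤ 5 * τ * max r s)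
    (hball : ∀ r : ℝ, ρ ≤ r → r ≤ (1 - σ) * R → 0 < r →
      closedBall (b r) r ⊆ closedBall a R)
    (bstar : E)
    (hstar : ∀ r : ℝ, ρ ≤ r → r ≤ (1 - σ) * R → 0 < r → ‖b r - bstar‖ ≤ 5 * τ * r)
    (hstarρ : 0 < ρ → bstar = b ρ) :
    ∀ r : ℝ, ρ ≤ r → r ≤ (1 - 3 * σ) * R → 0 < r →
      (1 + 10 * τ) * r ≤ (1 - σ) * R ∧
      closedBall bstar r ⊆ closedBall (b ((1 + 10 * τ) * r)) ((1 + 10 * τ) * r) ∧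
      closedBall (b ((1 + 10 * τ) * r)) ((1 + 10 * τ) * r) ⊆ closedBall a R ∧
      (ρ ≤ (1 - 5 * τ) * r →
        closedBall (b ((1 - 5 * τ) * r)) ((1 - 5 * τ) * r) ⊆ closedBall bstar r) := by
  intro r hrρ hr3 hr0
  have hτ' : τ ≤ 1 / 40 := by linarith
  -- (i)
  have h1 : (1 + 10 * τ) * r ≤ (1 - σ) * R := by
    nlinarith [mul_le_mul_of_nonneg_left hr3 (by linarith : (0:ℝ) ≤ 10 * τ),
      mul_nonneg (mul_nonneg hσ0 hσ0) hR.le,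
      mul_le_mul_of_nonneg_right (by linarith : 10 * τ ≤ σ) (by nlinarith : (0:ℝ) ≤ (1 - 3*σ) * R)]
  have hrρ' : ρ ≤ (1 + 10 * τ) * r := le_trans hrρ (by nlinarith)
  have hr0' : 0 < (1 + 10 * τ) * r := by nlinarith
  have hd := hstar ((1 + 10 * τ) * r) hrρ' h1 hr0'
  refine ⟨h1, ?_, hball _ hrρ' h1 hr0', ?_⟩
  · apply closedBall_subset_closedBall'
    rw [dist_comm, dist_eq_norm]
    have : 5 * τ * ((1 + 10 * τ) * r) ≤ 10 * τ * r := by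
      nlinarith [mul_nonneg (mul_nonneg hτ0 hτ0) hr0.le]
    linarith
  · intro hρle
    have h0'' : 0 < (1 - 5 * τ) * r := by nlinarith
    have h2'' : (1 - 5 * τ) * r ≤ (1 - σ) * R := le_trans (by nlinarith) h1
    have hd2 := hstar ((1 - 5 * τ) * r) hρle h2'' h0''
    apply closedBall_subset_closedBall'
    rw [dist_eq_norm]
    nlinarith [mul_nonneg (mul_nonneg hτ0 hτ0) hr0.le]
end

section
/- Let E be the Euclidean space ℝ⁸, R > 0, σ ∈ [0, 1/4], 0 ≤ τ ≤ σ/10, and 0 ≤ ρ ≤ (1−σ)R. Let b assign to every r with ρ ≤ r ≤ (1−σ)R and r > 0 a point b(r) ∈ E, with ‖b(r) − b(s)‖ ≤ 5τ·max(r, s) for all such r, s; let b_* ∈ E satisfy ‖b(r) − b_*‖ ≤ 5τ·r for every such r, with b_* = b(ρ) in case ρ > 0. Let μ be a Borel measure on E which is finite on bounded sets, and let θ₀ > 0, β ≥ 0, and m ≥ 1 be real numbers such that for every r with ρ ≤ r ≤ (1−σ)R and r > 0 one has m·θ₀ − β ≤ μ(B̄(b(r), r))/r⁷ ≤ m·θ₀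 + β. Then for every r with ρ ≤ r ≤ (1−3σ)R and r > 0, (1−5τ)⁷·(m·θ₀ − β) ≤ μ(B̄(b_*, r))/r⁷ ≤ (1+10τ)⁷·(m·θ₀ + β). -/
open Metric MeasureTheory

set_option maxHeartbeats 1600000 in
/-- density estimate after recentering, cf. the proof of
Lemma 3.4, Item (3): in `ℝ⁸`, if the centers `b(r)` satisfy the chaining
estimate, `b_*` is the limit center, and the density ratios
`μ(B̄(b(r), r))/r⁷` of a measure `μ` lie in `[mθ₀ − β, mθ₀ + β]` for all
scales `ρ ≤ r ≤ (1−σ)R`, then the recentered density ratios satisfy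
`(1−5τ)⁷(mθ₀ − β) ≤ μ(B̄(b_*, r))/r⁷ ≤ (1+10τ)⁷(mθ₀ + β)` for all
`ρ ≤ r ≤ (1−3σ)R`. -/
theorem weak_cone_recentered_density
    (R σ τ ρ : ℝ) (hR : 0 < R) (hσ0 : 0 ≤ σ) (hσ : σ ≤ 1 / 4)
    (hτ0 : 0 ≤ τ) (hτ : τ ≤ σ / 10) (hρ0 : 0 ≤ ρ) (hρ : ρ ≤ (1 - σ) * R)
    (b : ℝ → EuclideanSpace ℝ (Fin 8)) (bstar : EuclideanSpace ℝ (Fin 8))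
    (hchain : ∀ r s : ℝ, ρ ≤ r → r ≤ (1 - σ) * R → 0 < r →
      ρ ≤ s → s ≤ (1 - σ) * R → 0 < s → ‖b r - b s‖ ≤ 5 * τ * max r s)
    (hstar : ∀ r : ℝ, ρ ≤ r → r ≤ (1 - σ) * R → 0 < r → ‖b r - bstar‖ ≤ 5 * τ * r)
    (hstarρ : 0 < ρ → bstar = b ρ)
    (μ : Measure (EuclideanSpace ℝ (Fin 8)))
    (hμloc : ∀ s : Set (EuclideanSpace ℝ (Fin 8)), Bornology.IsBounded s → μ s < ⊤)
    (θ₀ β m : ℝ) (hθ₀ : 0 < θ₀) (hβ : 0 ≤ β) (hm : 1 ≤ m)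
    (hdens : ∀ r : ℝ, ρ ≤ r → r ≤ (1 - σ) * R → 0 < r →
      m * θ₀ - β ≤ (μ (closedBall (b r) r)).toReal / r ^ 7 ∧
      (μ (closedBall (b r) r)).toReal / r ^ 7 ≤ m * θ₀ + β) :
    ∀ r : ℝ, ρ ≤ r → r ≤ (1 - 3 * σ) * R → 0 < r →
      (1 - 5 * τ) ^ 7 * (m * θ₀ - β) ≤ (μ (closedBall bstar r)).toReal / r ^ 7 ∧
      (μ (closedBall bstar r)).toReal / r ^ 7 ≤ (1 + 10 * τ) ^ 7 * (m * θ₀ + β) := by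
  intro r hρr hr3 hr0
  have hτ40 : τ ≤ 1/40 := by linarith
  have hr1 : r ≤ (1 - σ) * R := by nlinarith
  have hub : 0 ≤ m * θ₀ + β := by nlinarith
  have h5τ : (0:ℝ) ≤ 1 - 5 * τ := by linarith
  constructor
  · -- lower bound
    by_cases hlow : m * θ₀ - β ≤ 0
    · have h1 : 0 ≤ (μ (closedBall bstar r)).toReal / r ^ 7 := by positivity
      have h2 : (0:ℝ) ≤ (1 - 5*τ)^7 := pow_nonneg h5τ 7
      nlinarith
    push_neg at hlow
    set s := max ρ ((1 - 5*τ) * r) with hs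
    have hs0 : 0 < s := lt_max_of_lt_right (by nlinarith)
    have hsρ : ρ ≤ s := le_max_left _ _
    have hsr : s ≤ r := max_le hρr (by nlinarith)
    have hsR : s ≤ (1 - σ) * R := hsr.trans hr1
    have hsub : closedBall (b s) s ⊆ closedBall bstar r := by
      rcases le_or_gt ρ ((1 - 5*τ) * r) with h | h
      · have hseq : s = (1 - 5*τ) * r := max_eq_right h
        intro x hx
        simp only [mem_closedBall] at hx ⊢
        have hb := hstar s hsρ hsR hs0
        have hd : dist (b s) bstar ≤ 5 * τ * s := by rwa [dist_eq_norm]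
        calc dist x bstar ≤ dist x (b s) + dist (b s) bstar := dist_triangle _ _ _
          _ ≤ s + 5 * τ * s := add_le_add hx hd
          _ ≤ r := by rw [hseq]; nlinarith
      · have hseq : s = ρ := max_eq_left h.le
        have hρpos : 0 < ρ := lt_of_le_of_lt (by nlinarith) h
        rw [hseq, hstarρ hρpos]
        exact closedBall_subset_closedBall hρr
    have hmono : (μ (closedBall (b s) s)).toReal ≤ (μ (closedBall bstar r)).toReal :=
      ENNReal.toReal_mono (hμloc _ isBounded_closedBall).ne (measure_mono hsub)
    have hd := (hdens s hsρ hsR hs0).1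
    rw [le_div_iff₀ (by positivity)] at hd ⊢
    have h1 : (1 - 5*τ) * r ≤ s := le_max_right _ _
    have h2 : ((1 - 5*τ) * r) ^ 7 ≤ s ^ 7 := pow_le_pow_left₀ (by positivity) h1 7
    calc (1 - 5*τ)^7 * (m*θ₀ - β) * r^7 = (m*θ₀ - β) * ((1 - 5*τ) * r)^7 := by ring
      _ ≤ (m*θ₀ - β) * s^7 := by nlinarith
      _ ≤ (μ (closedBall (b s) s)).toReal := hd
      _ ≤ _ := hmono
  · -- upper bound
    set s := (1 + 10*τ) * r with hs
    have hrs : r ≤ s := by rw [hs]; nlinarith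
    have hs0 : 0 < s := hr0.trans_le hrs
    have hsρ : ρ ≤ s := hρr.trans hrs
    have hsR : s ≤ (1 - σ) * R := by
      rw [hs]
      nlinarith [mul_le_mul_of_nonneg_left hr3 (show (0:ℝ) ≤ 1 + 10*τ by linarith),
        mul_nonneg (mul_nonneg hτ0 hσ0) hR.le, mul_nonneg hσ0 hR.le,
        mul_nonneg (mul_nonneg hσ0 hσ0) hR.le]
    have hsub : closedBall bstar r ⊆ closedBall (b s) s := by
      intro x hx
      simp only [mem_closedBall] at hx ⊢
      have hb := hstar s hsρ hsR hs0
      have hd : dist bstar (b s) ≤ 5 * τ * s := by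
        rw [dist_comm, dist_eq_norm]; exact hb
      calc dist x (b s) ≤ dist x bstar + dist bstar (b s) := dist_triangle _ _ _
        _ ≤ r + 5 * τ * s := add_le_add hx hd
        _ ≤ s := by rw [hs]; nlinarith
    have hmono : (μ (closedBall bstar r)).toReal ≤ (μ (closedBall (b s) s)).toReal :=
      ENNReal.toReal_mono (hμloc _ isBounded_closedBall).ne (measure_mono hsub)
    have hd := (hdens s hsρ hsR hs0).2
    rw [div_le_iff₀ (by positivity)] at hd ⊢
    calc (μ (closedBall bstar r)).toReal ≤ (μ (closedBall (b s) s)).toReal := hmono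
      _ ≤ (m*θ₀ + β) * s^7 := hd
      _ = (1 + 10*τ)^7 * (m*θ₀ + β) * r^7 := by rw [hs]; ring
end
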